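/- Let T be a tree, n ≥ dim(T), and P a branch of the linear tree D^n with bh(P) ≤ th(T). Then the inserted tree D^n≪P,T≫ equals T, the interior substitution ι_{D^n,P,T} is syntactically the identity substitution, and for any σ: D^n → Γ and τ: T → Γ the inserted substitution satisfies σ≪P,τ≫ ≡^max τ (syntactic equality on all locally maximal variables). -/

import Mathlib

universe u

namespace Ordinal

/-- Natural addition (Hessenberg sum) of ordinals, as in the former Mathlib
`SetTheory.Ordinal.NaturalOps`. -/
noncomputable def nadd : Ordinal.{u} → Ordinal.{u} → Ordinal.{u}
  | a, b =>
    max (blsub.{u, u} a fun a' _ => nadd a' b) (blsub.{u, u} b fun b' _ => nadd a b')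
termination_by o₁ o₂ => (o₁, o₂)

end Ordinal

infixl:65 " ♯ " => Ordinal.nadd

namespace Catt

/-! ### Finite planar rooted trees -/

abbrev Path := List ℕ

inductive Tree : Type
  | node : List Tree → Tree

/-- The list of child subtrees. -/
def Tree.children : Tree → List Tree
  | .node ts => ts

/-- Trunk height. -/
def Tree.th : Tree → ℕ
  | .node [t] => t.th + 1
  | _ => 0

/-- Dimension of a tree. -/
def Tree.dim : Tree → ℕ
  | .node [] => 0
  | .node (t :: ts) => max (t.dim + 1) (Tree.dim (.node ts))

/-- A tree is linear when its trunk height equals its dimension. -/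
def Tree.linear (T : Tree) : Prop := T.th = T.dim

/-- The linear tree of dimension `n` (the `n`-disc). -/
def discTree : ℕ → Tree
  | 0 => .node []
  | n + 1 => .node [discTree n]

/-- Suspension of a tree. -/
def Tree.susp (T : Tree) : Tree := .node [T]

/-- Subtree of `T` indexed by a list of naturals. -/
def Tree.subtree : List ℕ → Tree → Tree
  | [], T => T
  | k :: P, T => Tree.subtree P (T.children.getD k (.node []))

/-- Validity of a variable path in (the pasting context generated by) a tree:
a path `k₁ :: ⋯ :: kᵣ :: [j]` descends through children `kᵢ` and ends in the
`j`-th 0-dimensional endpoint of the resulting node. -/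
inductive IsPath : Tree → Path → Prop
  | point (ts : List Tree) (j : ℕ) : j ≤ ts.length → IsPath (.node ts) [j]
  | deeper (ts : List Tree) (k : ℕ) (p : Path) : k < ts.length →
      IsPath (ts.getD k (.node [])) p → IsPath (.node ts) (k :: p)

/-- Paths of locally maximal variables. -/
inductive IsMaxPath : Tree → Path → Prop
  | here : IsMaxPath (.node []) [0]
  | there (ts : List Tree) (k : ℕ) (p : Path) : k < ts.length →
      IsMaxPath (ts.getD k (.node [])) p → IsMaxPath (.node ts) (k :: p)

/-- A branch of a tree: a non-empty index list whose subtree is linear. -/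
inductive IsBranch : Tree → List ℕ → Prop
  | here (ts : List Tree) (k : ℕ) : k < ts.length → (ts.getD k (.node [])).linear →
      IsBranch (.node ts) [k]
  | there (ts : List Tree) (k : ℕ) (P : List ℕ) : k < ts.length → P ≠ [] →
      IsBranch (ts.getD k (.node [])) P → IsBranch (.node ts) (k :: P)

/-- The path of the unique locally maximal variable of a linear tree. -/
def Tree.maxPath : Tree → Path
  | .node [] => [0]
  | .node (t :: _) => 0 :: t.maxPath

/-- The locally maximal variable `⌊P⌋` corresponding to a branch `P` of `S`. -/
def branchVar : List ℕ → Tree → Path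
  | [], S => S.maxPath
  | [k], S => k :: (S.children.getD k (.node [])).maxPath
  | k :: P, S => k :: branchVar P (S.children.getD k (.node []))

/-- Branch height `bh(P)`. -/
def bh (P : List ℕ) : ℕ := P.length - 1

/-- Leaf height `lh(P)`, the dimension of `⌊P⌋`. -/
def lh (P : List ℕ) (S : Tree) : ℕ := (branchVar P S).length - 1

/-- The inserted tree `S ≪ P , T ≫`. -/
def insTree : List ℕ → Tree → Tree → Tree
  | [], S, _ => S
  | [k], S, T => .node (S.children.take k ++ T.children ++ S.children.drop (k + 1))
  | k :: P, S, T =>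
      .node (S.children.take k ++
        [insTree P (S.children.getD k (.node [])) (T.children.headD (.node []))] ++
        S.children.drop (k + 1))

/-- The branch of `S ≪ P , T ≫` induced by a branch `Q` of `T`. -/
def insBranch : List ℕ → List ℕ → List ℕ
  | [], Q => Q
  | [k], q :: Q => (q + k) :: Q
  | [k], [] => [k]
  | k :: P, Q => k :: insBranch P (Q.drop 1)

/-- The boundary `∂ₙ` of a tree (truncation at depth `n`). -/
def Tree.bdry : ℕ → Tree → Tree
  | 0, _ => .node []
  | _ + 1, .node [] => .node []
  | n + 1, .node (t :: ts) => .node (Tree.bdry n t :: (Tree.bdry (n + 1) (.node ts)).children)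

/-! ### Syntax of Catt -/

mutual
inductive Ty : Type
  | star : Ty
  | arr : Tm → Ty → Tm → Ty
inductive Tm : Type
  | var : Path → Tm
  | coh : Tree → Ty → (Path → Tm) → Tm
end

/-- A substitution assigns a term to each variable (path). -/
abbrev Sub := Path → Tm

/-- Contexts: named contexts whose variable names are paths. -/
abbrev Ctx := List (Path × Ty)

def Ty.dim : Ty → ℕ
  | .star => 0
  | .arr _ A _ => A.dim + 1

def Tm.dim : Tm → ℕ
  | .var p => p.length - 1
  | .coh _ A _ => A.dim

/-- Applying a substitution to a term. -/
def Tm.sub : Tm → Sub → Tm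
  | .var p, σ => σ p
  | .coh T A τ, σ => .coh T A (fun p => (τ p).sub σ)

/-- Applying a substitution to a type. -/
def Ty.sub : Ty → Sub → Ty
  | .star, _ => .star
  | .arr s A t, σ => .arr (s.sub σ) (A.sub σ) (t.sub σ)

/-- Composition of substitutions, diagrammatic order: `(σ.comp τ) = σ` followed by `τ`. -/
def Sub.comp (σ τ : Sub) : Sub := fun p => (σ p).sub τ

/-- The identity substitution. -/
def Sub.id : Sub := fun p => .var p

/-! ### Suspension -/

mutual
/-- Suspension of a term. -/
def Tm.susp : Tm → Tm
  | .var p => .var (0 :: p)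
  | .coh T A σ => .coh T.susp A.susp (fun p => match p with
      | [j] => .var [j]
      | 0 :: q => (σ q).susp
      | _ => .var p)
/-- Suspension of a type. -/
def Ty.susp : Ty → Ty
  | .star => .arr (.var [0]) .star (.var [1])
  | .arr s A t => .arr s.susp A.susp t.susp
end

/-- Suspension of a substitution. -/
def suspSub (σ : Sub) : Sub := fun p => match p with
  | [j] => .var [j]
  | 0 :: q => (σ q).susp
  | _ => .var p

/-- Suspension of a context. -/
def ctxSusp (Γ : Ctx) : Ctx :=
  ([0], .star) :: ([1], .star) :: Γ.map (fun e => (0 :: e.1, e.2.susp))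

/-- The substitution renaming a suspended term into the `k`-th wedge component
of a tree: `N ↦ [k]`, `S ↦ [k+1]`, `0 :: q ↦ k :: q`. -/
def compSub (k : ℕ) : Sub := fun p => match p with
  | [j] => .var [j + k]
  | 0 :: q => .var (k :: q)
  | _ => .var p

/-- The substitution including a tree as `m` consecutive wedge components
starting at offset `k`. -/
def wedgeShift (k : ℕ) : Sub := fun p => match p with
  | j :: q => .var ((j + k) :: q)
  | [] => .var []

/-- The type of the variable at path `p` in the pasting context of a tree. -/
def pathType : Path → Tree → Ty
  | [], _ => .star
  | [_], _ => .star
  | k :: p, S => ((pathType p (S.children.getD k (.node []))).susp).sub (compSub k)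

/-- All variable paths of a tree, with an offset for the 0-dimensional endpoints. -/
def treePathsAux : Tree → ℕ → List Path
  | .node [], k => [[k]]
  | .node (t :: ts), k =>
      [k] :: (treePathsAux t 0).map (k :: ·) ++ treePathsAux (.node ts) (k + 1)

/-- All variable paths of a tree. -/
def treePaths (T : Tree) : List Path := treePathsAux T 0

/-- The pasting context `⌊T⌋` generated by a tree. -/
def treeCtx (T : Tree) : Ctx := (treePaths T).map (fun p => (p, pathType p T))

/-! ### Disc substitutions and unbiased constructions -/

/-- The list of source/target pairs of a type, lowest dimension first. -/
def Ty.srcs : Ty → List (Tm × Tm)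
  | .star => []
  | .arr s A t => A.srcs ++ [(s, t)]

/-- The substitution `{A, u} : D^{dim A} → Γ` from a disc determined by a type
and a term. -/
def discSub (A : Ty) (u : Tm) : Sub := fun p =>
  let L := A.srcs
  let k := p.length - 1
  if k < L.length then
    (if p.getLastD 0 = 0 then (L.getD k (u, u)).1 else (L.getD k (u, u)).2)
  else u

/-- The boundary inclusion `δₙᵉ : ∂ₙ T → T` (`ε = false` is the source). -/
def incl (ε : Bool) : ℕ → Tree → Sub
  | 0, T => fun _ => if ε then .var [T.children.length] else .var [0]
  | n + 1, T => fun p => match p with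
      | [] => .var []
      | [j] => .var [j]
      | i :: q => ((incl ε n (T.children.getD i (.node []))) q).susp.sub (compSub i)

open Classical in
mutual
/-- The unbiased type `𝒰_T^n`. -/
noncomputable def unbiasedType : Tree → ℕ → Ty
  | _, 0 => .star
  | T, n + 1 =>
      .arr ((unbiasedTm (Tree.bdry n T) n).sub (incl false n T))
           (unbiasedType T n)
           ((unbiasedTm (Tree.bdry n T) n).sub (incl true n T))
termination_by T n => 2 * n
/-- The unbiased term `𝒯_T^n`. -/
noncomputable def unbiasedTm : Tree → ℕ → Tm
  | T, n =>
      if T = discTree n then .var T.maxPath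
      else .coh T (unbiasedType T n) (fun p => .var p)
termination_by T n => 2 * n + 1
end

/-- The unbiased coherence `𝒞_T^n`. -/
noncomputable def unbiasedCoh (T : Tree) (n : ℕ) : Tm :=
  .coh T (unbiasedType T n) (fun p => .var p)

/-- The identity coherence `𝟙` on a term `u` of type `A`. -/
noncomputable def idCoh (A : Ty) (u : Tm) : Tm :=
  (unbiasedCoh (discTree A.dim) (A.dim + 1)).sub (discSub A u)

/-! ### Insertion -/

/-- The interior substitution `ι : T → S ≪ P , T ≫`. -/
def iota : List ℕ → Tree → Tree → Sub
  | [], _, _ => fun p => .var p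
  | [k], _, _ => wedgeShift k
  | k :: P, S, T => fun p =>
      ((suspSub (iota P (S.children.getD k (.node [])) (T.children.headD (.node [])))) p).sub
        (compSub k)

/-- The exterior substitution `κ : S → S ≪ P , T ≫`. -/
noncomputable def kappa : List ℕ → Tree → Tree → Sub
  | [], _, _ => fun p => .var p
  | [k], S, T =>
      let m := T.children.length
      let n := (S.children.getD k (.node [])).dim + 1
      fun p => match p with
        | [] => .var []
        | [j] => if j ≤ k then .var [j] else .var [j + m - 1]
        | i :: q =>
          if i < k then .var (i :: q)
          else if i = k then
            ((discSub (unbiasedType T n) (unbiasedCoh T n)) (0 :: q)).sub (wedgeShift k)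
          else .var ((i + m - 1) :: q)
  | k :: P, S, T => fun p => match p with
      | [] => .var []
      | [j] => .var [j]
      | i :: q =>
        if i = k then
          ((suspSub (kappa P (S.children.getD k (.node [])) (T.children.headD (.node []))))
            (0 :: q)).sub (compSub k)
        else .var (i :: q)

/-- The inserted substitution `σ ≪ P , τ ≫ : S ≪ P , T ≫ → Γ`. -/
def insSub : List ℕ → Tree → Tree → Sub → Sub → Sub
  | [], _, _, σ, _ => σ
  | [k], _, T, σ, τ =>
      let m := T.children.length
      fun p => match p with
        | [] => σ []
        | [j] => if j < k then σ [j] else if j ≤ k + m then τ [j - k] else σ [j - m + 1]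
        | i :: q =>
          if i < k then σ (i :: q)
          else if i < k + m then τ ((i - k) :: q)
          else σ ((i - m + 1) :: q)
  | k :: P, S, T, σ, τ => fun p => match p with
      | [] => σ []
      | [j] => if j = k then τ [0] else if j = k + 1 then τ [1] else σ [j]
      | i :: q =>
        if i = k then
          insSub P (S.children.getD k (.node [])) (T.children.headD (.node []))
            (fun r => σ (k :: r)) (fun r => τ (0 :: r)) q
        else σ (i :: q)

/-! ### Syntactic equality (α-equality; substitutions are compared on all
valid variable paths of the relevant tree) -/

mutual
inductive TmEqv : Tm → Tm → Prop
  | var (p : Path) : TmEqv (.var p) (.var p)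
  | coh (T : Tree) (A B : Ty) (σ τ : Sub) : TyEqv A B →
      (∀ p, IsPath T p → TmEqv (σ p) (τ p)) → TmEqv (.coh T A σ) (.coh T B τ)
inductive TyEqv : Ty → Ty → Prop
  | star : TyEqv .star .star
  | arr {s s' t t' : Tm} {A A' : Ty} : TmEqv s s' → TyEqv A A' → TmEqv t t' →
      TyEqv (.arr s A t) (.arr s' A' t')
end

/-- Syntactic equality of substitutions out of (the context of) a tree. -/
def SubEqv (dom : Tree) (σ τ : Sub) : Prop := ∀ p, IsPath dom p → TmEqv (σ p) (τ p)

/-- Syntactic equality of substitutions on all locally maximal variables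
(`σ ≡ᵐᵃˣ τ`). -/
def MaxEqv (dom : Tree) (σ τ : Sub) : Prop := ∀ p, IsMaxPath dom p → TmEqv (σ p) (τ p)

/-! ### Insertion points and redexes -/

/-- An insertion point `(S, P, T)`. -/
def InsPoint (S : Tree) (P : List ℕ) (T : Tree) : Prop :=
  IsBranch S P ∧ bh P ≤ T.th

/-- An insertion redex `(S, P, T, Γ, σ, τ)` (the codomain context is implicit in
the raw substitutions): `⌊P⌋[σ] ≡ 𝒞_T^{lh(P)}[τ]`. -/
def InsRedex (S : Tree) (P : List ℕ) (T : Tree) (σ τ : Sub) : Prop :=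
  InsPoint S P T ∧ TmEqv (σ (branchVar P S)) ((unbiasedCoh T (lh P S)).sub τ)

/-! ### Identities, rewrite rules, reduction -/

/-- Identity terms: terms of the form `𝟙[σ]`. -/
def isIdentity (t : Tm) : Prop :=
  ∃ n σ, t = .coh (discTree n) (unbiasedType (discTree n) (n + 1)) σ

/-- The three generating rewrite rules of Catt_sua: disc removal,
endo-coherence removal, and insertion. -/
inductive SuaRule : Tm → Tm → Prop
  | disc (n : ℕ) (σ : Sub) :
      SuaRule (.coh (discTree n) (unbiasedType (discTree n) n) σ) (σ (discTree n).maxPath)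
  | ecr (T : Tree) (s : Tm) (A : Ty) (σ : Sub) :
      ¬ isIdentity (.coh T (.arr s A s) σ) →
      SuaRule (.coh T (.arr s A s) σ) (idCoh (A.sub σ) (s.sub σ))
  | ins (S T : Tree) (P : List ℕ) (A : Ty) (σ τ : Sub) :
      InsRedex S P T σ τ →
      (lh P S = T.dim ∨ T = discTree (lh P S - 1)) →
      ¬ isIdentity (.coh S A σ) →
      SuaRule (.coh S A σ)
        (.coh (insTree P S T) (A.sub (kappa P S T)) (insSub P S T σ τ))

mutual
/-- One-step reduction, flagged by whether the derivation uses the cell rule. -/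
inductive Red : Bool → Tm → Tm → Prop
  | rule {s t : Tm} : SuaRule s t → Red false s t
  | cell {b : Bool} {A B : Ty} (T : Tree) (σ : Sub) : RedTy b A B →
      Red true (.coh T A σ) (.coh T B σ)
  | arg {b : Bool} (T : Tree) (A : Ty) (σ τ : Sub) (p : Path) : IsPath T p →
      Red b (σ p) (τ p) → (∀ q, IsPath T q → q ≠ p → TmEqv (σ q) (τ q)) →
      Red b (.coh T A σ) (.coh T A τ)
inductive RedTy : Bool → Ty → Ty → Prop
  | src {b : Bool} {s s' t : Tm} {A : Ty} : Red b s s' → RedTy b (.arr s A t) (.arr s' A t)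
  | base {b : Bool} {s t : Tm} {A A' : Ty} : RedTy b A A' → RedTy b (.arr s A t) (.arr s A' t)
  | tgt {b : Bool} {s t t' : Tm} {A : Ty} : Red b t t' → RedTy b (.arr s A t) (.arr s A t')
end

/-- One-step reduction of terms. -/
def Red1 (s t : Tm) : Prop := ∃ b, Red b s t

/-- Multi-step reduction of terms. -/
def RedStar : Tm → Tm → Prop := Relation.ReflTransGen Red1

/-- Multi-step reduction of types. -/
def RedTyStar : Ty → Ty → Prop := Relation.ReflTransGen (fun A B => ∃ b, RedTy b A B)

/-- One-step reduction of substitutions out of a tree, flagged. -/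
def RedSubF (b : Bool) (dom : Tree) (σ τ : Sub) : Prop :=
  ∃ p, IsPath dom p ∧ Red b (σ p) (τ p) ∧ ∀ q, IsPath dom q → q ≠ p → TmEqv (σ q) (τ q)

/-! ### Free variables and support -/

mutual
inductive FvTm : Tm → Path → Prop
  | var (p : Path) : FvTm (.var p) p
  | coh {T : Tree} {A : Ty} {σ : Sub} {p q : Path} : IsPath T p → FvTm (σ p) q →
      FvTm (.coh T A σ) q
inductive FvTy : Ty → Path → Prop
  | src {s t : Tm} {A : Ty} {q : Path} : FvTm s q → FvTy (.arr s A t) q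
  | base {s t : Tm} {A : Ty} {q : Path} : FvTy A q → FvTy (.arr s A t) q
  | tgt {s t : Tm} {A : Ty} {q : Path} : FvTm t q → FvTy (.arr s A t) q
end

/-- Downward closure of a set of variables in a context. -/
inductive Closure (Γ : Ctx) (P : Path → Prop) : Path → Prop
  | base {p : Path} : P p → Closure Γ P p
  | step {p q : Path} {A : Ty} : Closure Γ P p → (p, A) ∈ Γ → FvTy A q → Closure Γ P q

/-- Support of a term. -/
def Tm.supp (Γ : Ctx) (t : Tm) : Set Path := {q | Closure Γ (FvTm t) q}

/-- Support of a substitution out of a tree. -/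
def subSupp (Γ : Ctx) (dom : Tree) (σ : Sub) : Set Path :=
  {q | Closure Γ (fun r => ∃ p, IsPath dom p ∧ FvTm (σ p) r) q}

/-! ### Typing and definitional equality, parameterized by a rule set -/

mutual
inductive CtxTy (R : Ctx → Tm → Tm → Prop) : Ctx → Prop
  | nil : CtxTy R []
  | cons {Γ : Ctx} {p : Path} {A : Ty} : CtxTy R Γ → TyTy R Γ A →
      CtxTy R ((p, A) :: Γ)
inductive TyTy (R : Ctx → Tm → Tm → Prop) : Ctx → Ty → Prop
  | star {Γ : Ctx} : TyTy R Γ .star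
  | arr {Γ : Ctx} {s t : Tm} {A : Ty} : TyTy R Γ A → TmTy R Γ s A → TmTy R Γ t A →
      TyTy R Γ (.arr s A t)
inductive TmTy (R : Ctx → Tm → Tm → Prop) : Ctx → Tm → Ty → Prop
  | var {Γ : Ctx} {p : Path} {A : Ty} : CtxTy R Γ → (p, A) ∈ Γ → TmTy R Γ (.var p) A
  | coh {Γ : Ctx} (S : Tree) (s t : Tm) (A : Ty) (σ : Sub) :
      TyTy R (treeCtx S) (.arr s A t) →
      (∀ p B, (p, B) ∈ treeCtx S → TmTy R Γ (σ p) (B.sub σ)) →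
      Tm.supp (treeCtx S) s =
        subSupp (treeCtx S) (Tree.bdry (S.dim - 1) S) (incl false (S.dim - 1) S) →
      Tm.supp (treeCtx S) t =
        subSupp (treeCtx S) (Tree.bdry (S.dim - 1) S) (incl true (S.dim - 1) S) →
      TmTy R Γ (.coh S (.arr s A t) σ) ((Ty.arr s A t).sub σ)
  | cohFull {Γ : Ctx} (S : Tree) (s t : Tm) (A : Ty) (σ : Sub) :
      TyTy R (treeCtx S) (.arr s A t) →
      (∀ p B, (p, B) ∈ treeCtx S → TmTy R Γ (σ p) (B.sub σ)) →
      Tm.supp (treeCtx S) s = {q | IsPath S q} →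
      Tm.supp (treeCtx S) t = {q | IsPath S q} →
      TmTy R Γ (.coh S (.arr s A t) σ) ((Ty.arr s A t).sub σ)
  | conv {Γ : Ctx} {u : Tm} {A B : Ty} : TmTy R Γ u A → TyEq R Γ A B → TmTy R Γ u B
inductive TmEq (R : Ctx → Tm → Tm → Prop) : Ctx → Tm → Tm → Prop
  | var {Γ : Ctx} (p : Path) : TmEq R Γ (.var p) (.var p)
  | symm {Γ : Ctx} {s t : Tm} : TmEq R Γ s t → TmEq R Γ t s
  | trans {Γ : Ctx} {s t u : Tm} : TmEq R Γ s t → TmEq R Γ t u → TmEq R Γ s u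
  | coh {Γ : Ctx} (S : Tree) (A B : Ty) (σ τ : Sub) : TyEq R (treeCtx S) A B →
      (∀ p C, (p, C) ∈ treeCtx S → TmEq R Γ (σ p) (τ p)) →
      TmEq R Γ (.coh S A σ) (.coh S B τ)
  | rule {Γ : Ctx} {s t : Tm} (A : Ty) : R Γ s t → TmTy R Γ s A → TmEq R Γ s t
inductive TyEq (R : Ctx → Tm → Tm → Prop) : Ctx → Ty → Ty → Prop
  | star {Γ : Ctx} : TyEq R Γ .star .star
  | arr {Γ : Ctx} {s s' t t' : Tm} {A A' : Ty} : TmEq R Γ s s' → TyEq R Γ A A' →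
      TmEq R Γ t t' → TyEq R Γ (.arr s A t) (.arr s' A' t')
end

/-- Well-typedness of a substitution: `Γ ⊢ σ : Δ`. -/
def SubTyped (R : Ctx → Tm → Tm → Prop) (Γ : Ctx) (σ : Sub) (Δ : Ctx) : Prop :=
  ∀ p A, (p, A) ∈ Δ → TmTy R Γ (σ p) (A.sub σ)

/-- Definitional equality of substitutions with domain `Δ`: `Γ ⊢ σ = τ`. -/
def SubDefEq (R : Ctx → Tm → Tm → Prop) (Γ Δ : Ctx) (σ τ : Sub) : Prop :=
  ∀ p A, (p, A) ∈ Δ → TmEq R Γ (σ p) (τ p)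

/-- Definitional equality of substitutions out of a tree on all locally maximal
variables (`σ =ᵐᵃˣ τ`). -/
def MaxDefEq (R : Ctx → Tm → Tm → Prop) (Γ : Ctx) (dom : Tree) (σ τ : Sub) : Prop :=
  ∀ p, IsMaxPath dom p → TmEq R Γ (σ p) (τ p)

/-! ### Conditions on rule sets -/

/-- The lifting condition. -/
def LiftCond (R : Ctx → Tm → Tm → Prop) : Prop :=
  ∀ Γ s t q A, R Γ s t → (∃ B, TmTy R ((q, A) :: Γ) s B) → TmEq R ((q, A) :: Γ) s t

/-- The substitution condition. -/
def SubCond (R : Ctx → Tm → Tm → Prop) : Prop :=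
  ∀ Γ s t Δ (σ : Sub), R Γ s t → (∀ p A, (p, A) ∈ Γ → TmTy R Δ (σ p) (A.sub σ)) →
    (∃ C, TmTy R Δ (s.sub σ) C) → TmEq R Δ (s.sub σ) (t.sub σ)

/-- The suspension condition. -/
def SuspCond (R : Ctx → Tm → Tm → Prop) : Prop :=
  ∀ Γ s t, R Γ s t → (∃ A, TmTy R (ctxSusp Γ) s.susp A) →
    TmEq R (ctxSusp Γ) s.susp t.susp

/-- A rule set is tame if it satisfies the lifting, substitution and suspension
conditions. -/
def Tame (R : Ctx → Tm → Tm → Prop) : Prop := LiftCond R ∧ SubCond R ∧ SuspCond R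

/-- The rule set generating Catt_sua. -/
def suaR : Ctx → Tm → Tm → Prop := fun _ s t => SuaRule s t

/-- The `n`-bounded restriction of the sua rule set, generating `n`-bounded
definitional equality `=ₙ`. -/
def suaBnd (n : ℕ) : Ctx → Tm → Tm → Prop := fun Γ s t => suaR Γ s t ∧ s.dim < n

/-! ### Syntactic complexity -/

open Classical in
/-- Syntactic complexity of a term: an ordinal below `ω ^ ω`. -/
noncomputable def Tm.sc : Tm → Ordinal :=
  Tm.rec (motive_1 := fun _ => Ordinal) (motive_2 := fun _ => Ordinal)
    0 (fun _ _ _ _ _ _ => 0)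
    (fun _ => 0)
    (fun T A σ _ ih =>
      (if isIdentity (.coh T A σ) then Ordinal.omega0 ^ (A.dim : Ordinal)
       else Ordinal.omega0 ^ (A.dim : Ordinal) ♯ Ordinal.omega0 ^ (A.dim : Ordinal)) ♯
        ((treePaths T).map ih).foldr (· ♯ ·) 0)

/-- Syntactic complexity of a substitution out of a tree. -/
noncomputable def scSub (dom : Tree) (σ : Sub) : Ordinal :=
  ((treePaths dom).map (fun p => (σ p).sc)).foldr (· ♯ ·) 0

/-!
A branch of the disc `D^n` is `[0, …, 0]` of length `k + 1` with `k < n`, and `bh P ≤ th T` forces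
`T = Σ^k T'`. Insertion along such a branch descends through the `k` suspensions on both sides and
then replaces the single child of `D^{n-k}` by the children of `T'`. Hence the inserted tree is `T`
and, on every variable of `T` (not only the locally maximal ones), the interior substitution is the
identity and `σ≪P,τ≫` agrees with `τ`.
-/

mutual
theorem tmEqv_refl : (t : Tm) → TmEqv t t
  | .var p => .var p
  | .coh T A σ => .coh T A A σ σ (tyEqv_refl A) (fun p _ => tmEqv_refl (σ p))
theorem tyEqv_refl : (A : Ty) → TyEqv A A
  | .star => .star
  | .arr s A t => .arr (tmEqv_refl s) (tyEqv_refl A) (tmEqv_refl t)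
end

theorem IsMaxPath.isPath {T : Tree} {p : Path} (h : IsMaxPath T p) : IsPath T p := by
  induction h with
  | here => exact .point [] 0 le_rfl
  | there ts k p hk _ ih => exact .deeper ts k p hk ih

theorem maxEqv_of_forall_isPath_eq {T : Tree} {σ τ : Sub} (h : ∀ p, IsPath T p → σ p = τ p) :
    MaxEqv T σ τ := fun p hp => h p hp.isPath ▸ tmEqv_refl (τ p)

theorem IsPath.exists_cons {T : Tree} {p : Path} (h : IsPath T p) : ∃ a q, p = a :: q := by
  cases h <;> exact ⟨_, _, rfl⟩

theorem bh_replicate (k : ℕ) : bh (List.replicate (k + 1) 0) = k := by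
  simp [bh]

theorem Tree.exists_eq_iterate_susp_of_le_th {k : ℕ} {T : Tree} (h : k ≤ T.th) :
    ∃ T', T = Tree.susp^[k] T' := by
  induction k generalizing T with
  | zero => exact ⟨T, rfl⟩
  | succ k ih =>
    obtain ⟨ts⟩ := T
    -- every other shape of `ts` has trunk height `0`
    match ts, h with
    | [t], h =>
      obtain ⟨T', rfl⟩ := ih (Nat.le_of_succ_le_succ h)
      exact ⟨T', (Function.iterate_succ_apply' Tree.susp k T').symm⟩

theorem eq_replicate_of_isBranch_discTree {n : ℕ} {P : List ℕ} (h : IsBranch (discTree n) P) :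
    ∃ k < n, P = List.replicate (k + 1) 0 := by
  induction P generalizing n with
  | nil =>
    generalize discTree n = S at h
    cases h
  | cons i P ih =>
    cases n with
    | zero =>
      change IsBranch (.node []) _ at h
      cases h <;> contradiction
    | succ n =>
      change IsBranch (.node [discTree n]) _ at h
      cases h with
      | here _ _ hi => exact ⟨0, n.succ_pos, by simpa using hi⟩
      | there _ _ _ hi _ hbr =>
        obtain rfl : i = 0 := by simpa using hi
        obtain ⟨k, hk, rfl⟩ := ih hbr
        exact ⟨k + 1, Nat.succ_lt_succ hk, rfl⟩

section DiscInsertion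

variable {k n : ℕ} {T : Tree}

theorem insTree_replicate_discTree (hk : k < n) :
    insTree (List.replicate (k + 1) 0) (discTree n) (Tree.susp^[k] T) = Tree.susp^[k] T := by
  induction k generalizing n with
  | zero =>
    obtain ⟨n, rfl⟩ := Nat.exists_eq_add_one_of_ne_zero (Nat.ne_zero_of_lt hk)
    obtain ⟨ts⟩ := T
    simp [insTree, Tree.children, discTree]
  | succ k ih =>
    obtain ⟨n, rfl⟩ := Nat.exists_eq_add_one_of_ne_zero (Nat.ne_zero_of_lt hk)
    rw [List.replicate_succ, insTree.eq_3 _ _ _ _ (by simp), Function.iterate_succ_apply']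
    simp [Tree.children, discTree, Tree.susp, ih (Nat.lt_of_succ_lt_succ hk)]

theorem iota_replicate_discTree (hk : k < n) {p : Path} (hp : IsPath (Tree.susp^[k] T) p) :
    iota (List.replicate (k + 1) 0) (discTree n) (Tree.susp^[k] T) p = .var p := by
  induction k generalizing n p with
  | zero =>
    obtain ⟨n, rfl⟩ := Nat.exists_eq_add_one_of_ne_zero (Nat.ne_zero_of_lt hk)
    obtain ⟨a, q, rfl⟩ := hp.exists_cons
    simp [iota, wedgeShift]
  | succ k ih =>
    obtain ⟨n, rfl⟩ := Nat.exists_eq_add_one_of_ne_zero (Nat.ne_zero_of_lt hk)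
    rw [Function.iterate_succ_apply'] at hp ⊢
    rw [List.replicate_succ, iota.eq_3 _ _ _ _ (by simp)]
    cases hp with
    | point _ j _ => simp [suspSub, Tm.sub, compSub]
    | deeper _ i q hi hq =>
      obtain rfl : i = 0 := by simpa using hi
      obtain ⟨a, q, rfl⟩ := hq.exists_cons
      simp [suspSub, Tree.children, discTree, Tree.susp, ih (Nat.lt_of_succ_lt_succ hk) hq, Tm.susp,
        Tm.sub, compSub]

theorem insSub_replicate_discTree (hk : k < n) (σ τ : Sub) {p : Path}
    (hp : IsPath (Tree.susp^[k] T) p) :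
    insSub (List.replicate (k + 1) 0) (discTree n) (Tree.susp^[k] T) σ τ p = τ p := by
  induction k generalizing n p σ τ with
  | zero =>
    obtain ⟨n, rfl⟩ := Nat.exists_eq_add_one_of_ne_zero (Nat.ne_zero_of_lt hk)
    cases hp with
    | point _ j hj => simp [insSub, Tree.children, hj.not_gt]
    | deeper _ i q hi hq =>
      obtain ⟨a, q, rfl⟩ := hq.exists_cons
      simp [insSub, Tree.children, hi]
  | succ k ih =>
    obtain ⟨n, rfl⟩ := Nat.exists_eq_add_one_of_ne_zero (Nat.ne_zero_of_lt hk)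
    rw [Function.iterate_succ_apply'] at hp ⊢
    rw [List.replicate_succ, insSub.eq_3 _ _ _ _ _ _ (by simp)]
    cases hp with
    | point _ j hj =>
      obtain rfl | rfl := Nat.le_one_iff_eq_zero_or_eq_one.mp hj
      all_goals simp
    | deeper _ i q hi hq =>
      obtain rfl : i = 0 := by simpa using hi
      obtain ⟨a, q, rfl⟩ := hq.exists_cons
      simp [Tree.children, discTree, Tree.susp, ih (Nat.lt_of_succ_lt_succ hk) _ _ hq]

end DiscInsertion

/-- For a tree `T`, `n ≥ dim(T)`, and a branch `P` of `D^n`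
with `bh(P) ≤ th(T)`: `D^n≪P,T≫ = T`, the interior substitution is
syntactically the identity, and `σ≪P,τ≫ ≡ᵐᵃˣ τ` for all `σ, τ`. -/
theorem disc_insertion_1 (T : Tree) (n : ℕ) (hn : T.dim ≤ n) (P : List ℕ)
    (hbr : IsBranch (discTree n) P) (hth : bh P ≤ T.th) :
    insTree P (discTree n) T = T ∧
    (∀ p : Path, IsPath T p → iota P (discTree n) T p = Tm.var p) ∧
    (∀ σ τ : Sub, MaxEqv T (insSub P (discTree n) T σ τ) τ) := by
  obtain ⟨k, hk, rfl⟩ := eq_replicate_of_isBranch_discTree hbr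
  obtain ⟨T', rfl⟩ := Tree.exists_eq_iterate_susp_of_le_th (bh_replicate k ▸ hth)
  exact ⟨insTree_replicate_discTree hk, fun p => iota_replicate_discTree hk,
    fun σ τ => maxEqv_of_forall_isPath_eq fun p => insSub_replicate_discTree hk σ τ⟩

end Catt
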